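/- Let B be an instance of (2,2)-E3-SAT and let I_{2,3}(B) be the one-to-one HRC instance constructed from B as described. Then B is satisfiable if and only if I_{2,3}(B) admits a stable matching. -/

import Mathlib

/-- A one-to-one HRC instance: residents are partitioned into single residents and
ordered couples; all hospitals have capacity 1. -/
structure HRC1 (R H : Type) where
  singles : List R
  couples : List (R × R)
  singlePref : R → List H
  couplePref : R × R → List (H × H)
  hospPref : H → List R

namespace HRC1

/-- `x` precedes `y` on the strict preference list `l`. -/
def Prefers {α : Type} [DecidableEq α] (l : List α) (x y : α) : Prop :=
  x ∈ l ∧ y ∈ l ∧ l.idxOf x < l.idxOf y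

variable {R H : Type} [DecidableEq R] [DecidableEq H]

/-- `M` is a matching of the instance `I`. -/
def IsMatching (I : HRC1 R H) (M : R → Option H) : Prop :=
  (∀ r₁ r₂ h, M r₁ = some h → M r₂ = some h → r₁ = r₂) ∧
  (∀ r ∈ I.singles, ∀ h, M r = some h → h ∈ I.singlePref r) ∧
  (∀ c ∈ I.couples,
    (M c.1 = none ∧ M c.2 = none) ∨
    ∃ hp ∈ I.couplePref c, M c.1 = some hp.1 ∧ M c.2 = some hp.2) ∧
  (∀ r, (M r).isSome → r ∈ I.singles ∨ ∃ c ∈ I.couples, r = c.1 ∨ r = c.2)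

/-- Hospital `h` is unmatched in `M`. -/
def HospFree (M : R → Option H) (h : H) : Prop := ∀ r, M r ≠ some h

/-- Hospital `h` is unmatched in `M`, or prefers `r` to its current assignee. -/
def HospOpenFor (I : HRC1 R H) (M : R → Option H) (h : H) (r : R) : Prop :=
  HospFree M h ∨ ∃ r', M r' = some h ∧ Prefers (I.hospPref h) r r'

/-- Blocking pair consisting of a single resident `r` and a hospital `h`. -/
def BlockSingle (I : HRC1 R H) (M : R → Option H) (r : R) (h : H) : Prop :=
  r ∈ I.singles ∧ h ∈ I.singlePref r ∧
  (M r = none ∨ ∃ h', M r = some h' ∧ Prefers (I.singlePref r) h h') ∧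
  I.HospOpenFor M h r

/-- Blocking pair consisting of a couple `c` and a pair of hospitals `hp` on its joint list. -/
def BlockCouple (I : HRC1 R H) (M : R → Option H) (c : R × R) (hp : H × H) : Prop :=
  c ∈ I.couples ∧ hp ∈ I.couplePref c ∧
  ((M c.1 = none ∧ M c.2 = none) ∨
    ∃ hp' ∈ I.couplePref c, M c.1 = some hp'.1 ∧ M c.2 = some hp'.2 ∧
      Prefers (I.couplePref c) hp hp') ∧
  (M c.1 = some hp.1 ∨ I.HospOpenFor M hp.1 c.1) ∧
  (M c.2 = some hp.2 ∨ I.HospOpenFor M hp.2 c.2)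

/-- `M` is a stable matching of the instance `I`. -/
def Stable (I : HRC1 R H) (M : R → Option H) : Prop :=
  I.IsMatching M ∧ (∀ r h, ¬ I.BlockSingle M r h) ∧ (∀ c hp, ¬ I.BlockCouple M c hp)

end HRC1

/-- An instance of (2,2)-E3-SAT: `m` clauses, each with exactly 3 literals over `n`
variables (a literal is a variable together with a polarity, `true` for positive);
`occ l` enumerates the two occurrences of the literal `l`, so that each of the literals
`vᵢ` and `¬vᵢ` appears exactly twice. -/
structure E3SAT (n m : ℕ) where
  clause : Fin m → Fin 3 → Fin n × Bool
  occ : Fin n × Bool → Fin 2 → Fin m × Fin 3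
  occ_spec : ∀ l r, clause (occ l r).1 (occ l r).2 = l
  occ_inj : ∀ l, occ l 0 ≠ occ l 1
  occ_surj : ∀ j s, ∃ r, occ (clause j s) r = (j, s)

namespace E3SAT

variable {n m : ℕ}

/-- `B` is satisfiable. -/
def Satisfiable (B : E3SAT n m) : Prop :=
  ∃ f : Fin n → Bool, ∀ j : Fin m, ∃ s : Fin 3, f (B.clause j s).1 = (B.clause j s).2

/-- The index (`0` or `1`) of the occurrence of its literal that position `s` of
clause `j` constitutes. -/
def rIdx (B : E3SAT n m) (j : Fin m) (s : Fin 3) : Fin 2 :=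
  if B.occ (B.clause j s) 0 = (j, s) then 0 else 1

end E3SAT

/-- Residents of the instance `I₂₃(B)`: `X i r = x_i^{r+1}`, `Xb i r = x̄_i^{r+1}`,
`P j s = p_j^{s+1}`, `Q j s = q_j^{s+1}` (0-based indices). -/
inductive Res2 (n m : ℕ)
  | X (i : Fin n) (r : Fin 2)
  | Xb (i : Fin n) (r : Fin 2)
  | P (j : Fin m) (s : Fin 3)
  | Q (j : Fin m) (s : Fin 3)
deriving DecidableEq

/-- Hospitals of the instance `I₂₃(B)`: `h i k = h_i^{k+1}`, `y j s = y_j^{s+1}`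
(0-based indices). -/
inductive Hos2 (n m : ℕ)
  | h (i : Fin n) (k : Fin 2)
  | y (j : Fin m) (s : Fin 3)
deriving DecidableEq

variable {n m : ℕ}

/-- The hospital `y(x_i^{r+1})` (for `b = true`) resp. `y(x̄_i^{r+1})` (for `b = false`):
the clause-position hospital of the `(r+1)`-th occurrence of the literal. -/
def yLit (B : E3SAT n m) (i : Fin n) (b : Bool) (r : Fin 2) : Hos2 n m :=
  Hos2.y (B.occ (i, b) r).1 (B.occ (i, b) r).2

/-- The resident `x(y_j^{s+1})`: the occurrence-copy of the literal at position `s`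
of clause `c_j`. -/
def xOfY (B : E3SAT n m) (j : Fin m) (s : Fin 3) : Res2 n m :=
  let l := B.clause j s
  if l.2 then Res2.X l.1 (B.rIdx j s) else Res2.Xb l.1 (B.rIdx j s)

/-- The one-to-one HRC instance `I₂₃(B)` constructed from the (2,2)-E3-SAT
instance `B`. -/
def instI23 (B : E3SAT n m) : HRC1 (Res2 n m) (Hos2 n m) where
  singles := []
  couples :=
    ((List.finRange n).map fun i => (Res2.X i 0, Res2.X i 1)) ++
    ((List.finRange n).map fun i => (Res2.Xb i 0, Res2.Xb i 1)) ++
    ((List.finRange m).flatMap fun j =>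
      (List.finRange 3).map fun s => (Res2.P j s, Res2.Q j s))
  singlePref := fun _ => []
  couplePref := fun c => match c with
    | (Res2.X i r, Res2.X i' r') =>
        if i' = i ∧ r = 0 ∧ r' = 1 then
          [(Hos2.h i 0, Hos2.h i 1), (yLit B i true 0, yLit B i true 1)]
        else []
    | (Res2.Xb i r, Res2.Xb i' r') =>
        if i' = i ∧ r = 0 ∧ r' = 1 then
          [(Hos2.h i 0, Hos2.h i 1), (yLit B i false 0, yLit B i false 1)]
        else []
    | (Res2.P j s, Res2.Q j' s') =>
        if j' = j ∧ s' = s then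
          if s = 0 then [(Hos2.y j 0, Hos2.y j 1)]
          else if s = 1 then [(Hos2.y j 1, Hos2.y j 2)]
          else [(Hos2.y j 2, Hos2.y j 0)]
        else []
    | _ => []
  hospPref := fun hh => match hh with
    | Hos2.h i k =>
        if k = 0 then [Res2.X i 0, Res2.Xb i 0]
        else [Res2.Xb i 1, Res2.X i 1]
    | Hos2.y j s =>
        if s = 0 then [xOfY B j 0, Res2.P j 0, Res2.Q j 2]
        else if s = 1 then [xOfY B j 1, Res2.P j 1, Res2.Q j 0]
        else [xOfY B j 2, Res2.P j 2, Res2.Q j 1]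

/-!
From a satisfying assignment `f`, send the couple of each true literal to its two clause
hospitals and the couple of each false literal to `(h_i^1, h_i^2)`; in a clause whose only
true literal sits at position `t`, the `(p, q)` couple that lists the other two positions
takes them. A literal couple can only block at `(h_i^1, h_i^2)`, one of which is held by the
resident it ranks first. An unmatched `(p, q)` couple can only block at two hospitals of
false literals; as the clause is satisfied, its third literal is then the only true one, and
that couple would have been matched.

Conversely, in a stable matching `h_i^1` is held by `x_i^1` or `x̄_i^1` (otherwise
`(x_i^1, x_i^2)` blocks with `(h_i^1, h_i^2)`), and in every clause some `y_j^s` is held by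
its literal copy: otherwise the three `(p, q)` couples, each wanting two of the three
hospitals `y_j^s` cyclically, admit no stable configuration. Setting `v_i` true iff `x_i^1`
is not at `h_i^1` then satisfies every clause.
-/

namespace HRC1

section Prefers

variable {α : Type} [DecidableEq α] {a b c x y : α} {l : List α}

theorem not_prefers_head : ¬ Prefers (a :: l) x a := by
  rintro ⟨-, -, hlt⟩
  simp at hlt

theorem prefers_head (hy : y ∈ l) (hne : y ≠ a) : Prefers (a :: l) a y :=
  ⟨by simp, by simp [hy], by simp [List.idxOf_cons_ne _ hne.symm]⟩

theorem eq_of_prefers_pair (h : Prefers [a, b] x b) : x = a := by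
  obtain ⟨hx, -, hlt⟩ := h
  simp only [List.mem_cons, List.not_mem_nil, or_false] at hx
  rcases hx with rfl | rfl
  · rfl
  · exact absurd hlt (lt_irrefl _)

theorem not_prefers_last (hxa : x ≠ a) (hxb : x ≠ b) : ¬ Prefers [a, b, x] x y := by
  rintro ⟨-, hy, hlt⟩
  have hlen := List.idxOf_lt_length_of_mem hy
  simp [List.idxOf_cons_ne _ hxa.symm, List.idxOf_cons_ne _ hxb.symm] at hlt hlen
  omega

theorem prefers_middle (hba : b ≠ a) (hca : c ≠ a) (hcb : c ≠ b) : Prefers [a, b, c] b c :=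
  ⟨by simp, by simp, by simp [List.idxOf_cons_ne _ hba.symm, List.idxOf_cons_ne _ hca.symm,
    List.idxOf_cons_ne _ hcb.symm]⟩

end Prefers

variable {R H : Type} {I : HRC1 R H} {M : R → Option H}

def HospListsComplete (I : HRC1 R H) : Prop :=
  (∀ r ∈ I.singles, ∀ h ∈ I.singlePref r, r ∈ I.hospPref h) ∧
  ∀ c ∈ I.couples, ∀ hp ∈ I.couplePref c, c.1 ∈ I.hospPref hp.1 ∧ c.2 ∈ I.hospPref hp.2

theorem IsMatching.mem_hospPref (hI : I.HospListsComplete) (hM : I.IsMatching M) {r : R}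
    {h : H} (hr : M r = some h) : r ∈ I.hospPref h := by
  rcases hM.2.2.2 r (by simp [hr]) with hs | ⟨c, hc, rfl | rfl⟩
  · exact hI.1 r hs h (hM.2.1 r hs h hr)
  all_goals
    rcases hM.2.2.1 c hc with ⟨h₁, h₂⟩ | ⟨hp, hmem, h₁, h₂⟩
    · simp_all
  · obtain rfl := Option.some.inj (hr.symm.trans h₁)
    exact (hI.2 c hc hp hmem).1
  · obtain rfl := Option.some.inj (hr.symm.trans h₂)
    exact (hI.2 c hc hp hmem).2

theorem IsMatching.not_hospOpenFor_of_head [DecidableEq R] (hM : I.IsMatching M) {h : H}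
    {a r : R} {l : List R} (hpref : I.hospPref h = a :: l) (ha : M a = some h) :
    ¬ I.HospOpenFor M h r := by
  rintro (hfree | ⟨r', hr', hpr⟩)
  · exact hfree a ha
  · obtain rfl := hM.1 _ _ _ hr' ha
    rw [hpref] at hpr
    exact not_prefers_head hpr

theorem BlockCouple.prefers [DecidableEq R] [DecidableEq H] {c : R × R} {hp q : H × H}
    (hb : I.BlockCouple M c hp) (h₁ : M c.1 = some q.1) (h₂ : M c.2 = some q.2) :
    Prefers (I.couplePref c) hp q := by
  obtain ⟨-, -, ⟨h₁', -⟩ | ⟨q', -, e₁, e₂, hpref⟩, -⟩ := hb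
  · simp [h₁] at h₁'
  · obtain rfl : q' = q :=
      Prod.ext (Option.some.inj (e₁.symm.trans h₁)) (Option.some.inj (e₂.symm.trans h₂))
    exact hpref

end HRC1

namespace E3SAT

variable (B : E3SAT n m) (f : Fin n → Bool)

def LitTrue (j : Fin m) (s : Fin 3) : Prop := f (B.clause j s).1 = (B.clause j s).2

instance (j : Fin m) (s : Fin 3) : Decidable (B.LitTrue f j s) :=
  inferInstanceAs (Decidable (_ = _))

def OnlyTrueAt (j : Fin m) (t : Fin 3) : Prop :=
  B.LitTrue f j t ∧ ¬ B.LitTrue f j (t + 1) ∧ ¬ B.LitTrue f j (t + 2)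

instance (j : Fin m) (t : Fin 3) : Decidable (B.OnlyTrueAt f j t) :=
  inferInstanceAs (Decidable (_ ∧ _))

variable {B} {l : Fin n × Bool} {r : Fin 2} {j : Fin m} {s : Fin 3}

theorem clause_eq_of_occ_eq (h : B.occ l r = (j, s)) : B.clause j s = l := by
  simpa [h] using B.occ_spec l r

theorem rIdx_eq_of_occ_eq (h : B.occ l r = (j, s)) : B.rIdx j s = r := by
  rw [rIdx, clause_eq_of_occ_eq h]
  fin_cases r <;> simp only [Fin.zero_eta, Fin.mk_one] at h
  · simp [h]
  · simp [← h, B.occ_inj l]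

end E3SAT

def Res2.lit (i : Fin n) (b : Bool) (r : Fin 2) : Res2 n m :=
  if b then Res2.X i r else Res2.Xb i r

@[simp]
theorem Res2.lit_ne_P {i : Fin n} {b : Bool} {r : Fin 2} {j : Fin m} {s : Fin 3} :
    Res2.lit i b r ≠ Res2.P j s := by
  cases b <;> simp [Res2.lit]

@[simp]
theorem Res2.lit_ne_Q {i : Fin n} {b : Bool} {r : Fin 2} {j : Fin m} {s : Fin 3} :
    Res2.lit i b r ≠ Res2.Q j s := by
  cases b <;> simp [Res2.lit]

section Literals

variable (B : E3SAT n m) {i : Fin n} {b : Bool} {r : Fin 2} {j : Fin m} {s : Fin 3}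

theorem xOfY_eq_lit : xOfY B j s = Res2.lit (B.clause j s).1 (B.clause j s).2 (B.rIdx j s) :=
  rfl

theorem xOfY_of_occ_eq {l : Fin n × Bool} (h : B.occ l r = (j, s)) :
    xOfY B j s = Res2.lit l.1 l.2 r := by
  rw [xOfY_eq_lit, E3SAT.clause_eq_of_occ_eq h, E3SAT.rIdx_eq_of_occ_eq h]

theorem xOfY_ne_P {j' : Fin m} {s' : Fin 3} : xOfY B j s ≠ Res2.P j' s' := by
  simp [xOfY_eq_lit]

theorem xOfY_ne_Q {j' : Fin m} {s' : Fin 3} : xOfY B j s ≠ Res2.Q j' s' := by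
  simp [xOfY_eq_lit]

@[simp]
theorem yLit_ne_h {i' : Fin n} {k : Fin 2} : yLit B i b r ≠ Hos2.h i' k := by
  simp [yLit]

end Literals

namespace instI23

open HRC1

variable (B : E3SAT n m) {i : Fin n} {b : Bool} {j : Fin m} {s : Fin 3}

theorem mem_couples {c : Res2 n m × Res2 n m} : c ∈ (instI23 B).couples ↔
    (∃ i b, c = (Res2.lit i b 0, Res2.lit i b 1)) ∨ ∃ j s, c = (Res2.P j s, Res2.Q j s) := by
  simp only [instI23, List.mem_append, List.mem_map, List.mem_finRange, true_and,
    List.mem_flatMap, Res2.lit, Bool.exists_bool, Bool.false_eq_true, if_false, if_true, eq_comm,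
    exists_or]
  tauto

theorem exists_couple_mem (r : Res2 n m) : ∃ c ∈ (instI23 B).couples, r = c.1 ∨ r = c.2 := by
  cases r with
  | X i r =>
    exact ⟨_, (mem_couples B).2 (Or.inl ⟨i, true, rfl⟩), by fin_cases r <;> simp [Res2.lit]⟩
  | Xb i r =>
    exact ⟨_, (mem_couples B).2 (Or.inl ⟨i, false, rfl⟩), by fin_cases r <;> simp [Res2.lit]⟩
  | P j s => exact ⟨_, (mem_couples B).2 (Or.inr ⟨j, s, rfl⟩), Or.inl rfl⟩
  | Q j s => exact ⟨_, (mem_couples B).2 (Or.inr ⟨j, s, rfl⟩), Or.inr rfl⟩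

theorem couplePref_lit : (instI23 B).couplePref (Res2.lit i b 0, Res2.lit i b 1) =
    [(Hos2.h i 0, Hos2.h i 1), (yLit B i b 0, yLit B i b 1)] := by
  cases b <;> simp [instI23, Res2.lit]

theorem couplePref_PQ : (instI23 B).couplePref (Res2.P j s, Res2.Q j s) =
    [(Hos2.y j s, Hos2.y j (s + 1))] := by
  fin_cases s <;> simp [instI23]

theorem hospPref_h_zero :
    (instI23 B).hospPref (Hos2.h i 0) = [Res2.lit i true 0, Res2.lit i false 0] :=
  rfl

theorem hospPref_h_one :
    (instI23 B).hospPref (Hos2.h i 1) = [Res2.lit i false 1, Res2.lit i true 1] :=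
  rfl

theorem hospPref_y :
    (instI23 B).hospPref (Hos2.y j s) = [xOfY B j s, Res2.P j s, Res2.Q j (s + 2)] := by
  fin_cases s <;> rfl

theorem hospListsComplete : (instI23 B).HospListsComplete := by
  refine ⟨fun r hr => by simp [instI23] at hr, fun c hc hp hmem => ?_⟩
  rcases (mem_couples B).1 hc with ⟨i, b, rfl⟩ | ⟨j, s, rfl⟩
  · rw [couplePref_lit] at hmem
    simp only [List.mem_cons, List.not_mem_nil, or_false] at hmem
    rcases hmem with rfl | rfl
    · cases b <;> simp [hospPref_h_zero, hospPref_h_one]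
    · simp [yLit, hospPref_y, xOfY_of_occ_eq B (l := (i, b)) rfl]
  · rw [couplePref_PQ, List.mem_singleton] at hmem
    subst hmem
    simp [hospPref_y, add_assoc]

section Matching

variable {B} {M : Res2 n m → Option (Hos2 n m)} (hM : (instI23 B).IsMatching M)
include hM

theorem lit_cases (i : Fin n) (b : Bool) :
    (M (Res2.lit i b 0) = none ∧ M (Res2.lit i b 1) = none) ∨
    (∀ r, M (Res2.lit i b r) = some (Hos2.h i r)) ∨
    (∀ r, M (Res2.lit i b r) = some (yLit B i b r)) := by
  rcases hM.2.2.1 _ ((mem_couples B).2 (Or.inl ⟨i, b, rfl⟩)) with h | ⟨hp, hmem, h₀, h₁⟩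
  · exact Or.inl h
  · rw [couplePref_lit] at hmem
    simp only [List.mem_cons, List.not_mem_nil, or_false] at hmem
    rcases hmem with rfl | rfl
    · exact Or.inr (Or.inl (Fin.forall_fin_two.2 ⟨h₀, h₁⟩))
    · exact Or.inr (Or.inr (Fin.forall_fin_two.2 ⟨h₀, h₁⟩))

theorem PQ_cases (j : Fin m) (s : Fin 3) :
    (M (Res2.P j s) = none ∧ M (Res2.Q j s) = none) ∨
    (M (Res2.P j s) = some (Hos2.y j s) ∧ M (Res2.Q j s) = some (Hos2.y j (s + 1))) := by
  rcases hM.2.2.1 _ ((mem_couples B).2 (Or.inr ⟨j, s, rfl⟩)) with h | ⟨hp, hmem, h₀, h₁⟩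
  · exact Or.inl h
  · rw [couplePref_PQ, List.mem_singleton] at hmem
    subst hmem
    exact Or.inr ⟨h₀, h₁⟩

theorem lit_zero_eq_h_of_lit_one_eq_h (h : M (Res2.lit i b 1) = some (Hos2.h i 1)) :
    M (Res2.lit i b 0) = some (Hos2.h i 0) := by
  rcases lit_cases hM i b with ⟨-, h'⟩ | h' | h'
  · simp [h'] at h
  · exact h' 0
  · simp [h' 1] at h

theorem lit_zero_ne_h_of_lit_eq_y {r : Fin 2} (h : M (Res2.lit i b r) = some (Hos2.y j s)) :
    M (Res2.lit i b 0) ≠ some (Hos2.h i 0) := by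
  rcases lit_cases hM i b with ⟨h₀, h₁⟩ | h' | h'
  · fin_cases r <;> simp_all
  · simp [h' r] at h
  · simp [h' 0]

theorem hospFree_y (hx : M (xOfY B j s) ≠ some (Hos2.y j s))
    (hP : M (Res2.P j s) ≠ some (Hos2.y j s)) (hQ : M (Res2.Q j (s + 2)) ≠ some (Hos2.y j s)) :
    HospFree M (Hos2.y j s) := by
  intro r hr
  have hmem := hM.mem_hospPref (hospListsComplete B) hr
  simp only [hospPref_y, List.mem_cons, List.not_mem_nil, or_false] at hmem
  rcases hmem with rfl | rfl | rfl <;> contradiction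

end Matching

theorem blockCouple_PQ {M : Res2 n m → Option (Hos2 n m)} {t : Fin 3}
    (hP : M (Res2.P j t) = none) (hQ : M (Res2.Q j t) = none)
    (h₀ : (instI23 B).HospOpenFor M (Hos2.y j t) (Res2.P j t))
    (h₁ : HospFree M (Hos2.y j (t + 1))) :
    (instI23 B).BlockCouple M (Res2.P j t, Res2.Q j t) (Hos2.y j t, Hos2.y j (t + 1)) :=
  ⟨(mem_couples B).2 (Or.inr ⟨j, t, rfl⟩), by simp [couplePref_PQ], Or.inl ⟨hP, hQ⟩,
    Or.inr h₀, Or.inr (Or.inl h₁)⟩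

section SatToStable

variable (f : Fin n → Bool)

def matchingOf : Res2 n m → Option (Hos2 n m)
  | .X i r => some (if f i then yLit B i true r else .h i r)
  | .Xb i r => some (if f i then .h i r else yLit B i false r)
  | .P j s => if B.OnlyTrueAt f j (s + 2) then some (.y j s) else none
  | .Q j s => if B.OnlyTrueAt f j (s + 2) then some (.y j (s + 1)) else none

/-- The inverse of `matchingOf B f`; it shows that no hospital is assigned twice. -/
def occupant : Hos2 n m → Option (Res2 n m)
  | .h i k => some (Res2.lit i (!f i) k)
  | .y j s =>
      if B.LitTrue f j s then some (xOfY B j s)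
      else if B.OnlyTrueAt f j (s + 2) then some (.P j s)
      else if B.OnlyTrueAt f j (s + 1) then some (.Q j (s + 2))
      else none

variable {B f} {r : Fin 2}

theorem matchingOf_lit :
    matchingOf B f (Res2.lit i b r) = some (if f i = b then yLit B i b r else .h i r) := by
  cases b <;> cases hf : f i <;> simp [matchingOf, Res2.lit, hf]

theorem matchingOf_xOfY (h : B.LitTrue f j s) : matchingOf B f (xOfY B j s) = some (.y j s) := by
  obtain ⟨r, hr⟩ := B.occ_surj j s
  have h' : f (B.clause j s).1 = (B.clause j s).2 := h
  simp [xOfY_of_occ_eq B hr, matchingOf_lit, h', yLit, hr]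

theorem occupant_matchingOf_lit {h : Hos2 n m} (hr : matchingOf B f (Res2.lit i b r) = some h) :
    occupant B f h = some (Res2.lit i b r) := by
  rw [matchingOf_lit, Option.some.injEq] at hr
  subst hr
  split_ifs with hb
  · rcases hocc : B.occ (i, b) r with ⟨j, s⟩
    have hl : B.LitTrue f j s := by simp [E3SAT.LitTrue, E3SAT.clause_eq_of_occ_eq hocc, hb]
    simp [yLit, hocc, occupant, hl, xOfY_of_occ_eq B hocc]
  · cases b <;> simp_all [occupant]

theorem occupant_matchingOf {x : Res2 n m} {h : Hos2 n m} (hx : matchingOf B f x = some h) :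
    occupant B f h = some x := by
  cases x with
  | X i r => exact occupant_matchingOf_lit (b := true) hx
  | Xb i r => exact occupant_matchingOf_lit (b := false) hx
  | P j s =>
    by_cases ht : B.OnlyTrueAt f j (s + 2)
    · simp only [matchingOf, if_pos ht, Option.some.injEq] at hx
      subst hx
      have hs : ¬ B.LitTrue f j s := by simpa [add_assoc] using ht.2.1
      simp [occupant, hs, ht]
    · simp [matchingOf, ht] at hx
  | Q j s =>
    by_cases ht : B.OnlyTrueAt f j (s + 2)
    · simp only [matchingOf, if_pos ht, Option.some.injEq] at hx
      subst hx
      have hs : ¬ B.LitTrue f j s := by simpa [add_assoc] using ht.2.1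
      have hs₁ : ¬ B.LitTrue f j (s + 1) := by simpa [add_assoc] using ht.2.2
      have hs₂ : ¬ B.OnlyTrueAt f j s := fun h => hs h.1
      simp [occupant, hs₁, hs₂, add_assoc, ht]
    · simp [matchingOf, ht] at hx

theorem isMatching_matchingOf : (instI23 B).IsMatching (matchingOf B f) := by
  refine ⟨fun x₁ x₂ h h₁ h₂ => ?_, fun x hx => by simp [instI23] at hx, fun c hc => ?_,
    fun x _ => Or.inr (exists_couple_mem B x)⟩
  · exact Option.some.inj ((occupant_matchingOf h₁).symm.trans (occupant_matchingOf h₂))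
  rcases (mem_couples B).1 hc with ⟨i, b, rfl⟩ | ⟨j, s, rfl⟩
  · refine Or.inr ?_
    by_cases hb : f i = b
    · exact ⟨(yLit B i b 0, yLit B i b 1), by simp [couplePref_lit], by simp [matchingOf_lit, hb],
        by simp [matchingOf_lit, hb]⟩
    · exact ⟨(.h i 0, .h i 1), by simp [couplePref_lit], by simp [matchingOf_lit, hb],
        by simp [matchingOf_lit, hb]⟩
  · by_cases ht : B.OnlyTrueAt f j (s + 2)
    · exact Or.inr ⟨(.y j s, .y j (s + 1)), by simp [couplePref_PQ], by simp [matchingOf, ht],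
        by simp [matchingOf, ht]⟩
    · exact Or.inl ⟨by simp [matchingOf, ht], by simp [matchingOf, ht]⟩

theorem not_blockCouple_matchingOf_lit (hp : Hos2 n m × Hos2 n m) :
    ¬ (instI23 B).BlockCouple (matchingOf B f) (Res2.lit i b 0, Res2.lit i b 1) hp := by
  intro hb
  have hM := isMatching_matchingOf (B := B) (f := f)
  by_cases hfb : f i = b
  · have hpref := hb.prefers (q := (yLit B i b 0, yLit B i b 1))
      (by simp [matchingOf_lit, hfb]) (by simp [matchingOf_lit, hfb])
    rw [couplePref_lit] at hpref
    obtain rfl := eq_of_prefers_pair hpref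
    obtain ⟨-, -, -, h₀, h₁⟩ := hb
    -- the `h`-hospital that ranks the copy of `¬b` first is held by that copy
    cases b
    · refine hM.not_hospOpenFor_of_head (hospPref_h_zero B) ?_ (h₀.resolve_left ?_) <;>
        simp [matchingOf_lit, hfb]
    · refine hM.not_hospOpenFor_of_head (hospPref_h_one B) ?_ (h₁.resolve_left ?_) <;>
        simp [matchingOf_lit, hfb]
  · have hpref := hb.prefers (q := (.h i 0, .h i 1))
      (by simp [matchingOf_lit, hfb]) (by simp [matchingOf_lit, hfb])
    rw [couplePref_lit] at hpref
    exact not_prefers_head hpref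

theorem not_blockCouple_matchingOf_PQ (hf : ∀ j, ∃ s, B.LitTrue f j s)
    (hp : Hos2 n m × Hos2 n m) :
    ¬ (instI23 B).BlockCouple (matchingOf B f) (Res2.P j s, Res2.Q j s) hp := by
  intro hb
  have hM := isMatching_matchingOf (B := B) (f := f)
  by_cases ht : B.OnlyTrueAt f j (s + 2)
  · have hpref := hb.prefers (q := (.y j s, .y j (s + 1)))
      (by simp [matchingOf, ht]) (by simp [matchingOf, ht])
    rw [couplePref_PQ] at hpref
    exact not_prefers_head hpref
  obtain ⟨-, hmem, -, h₀, h₁⟩ := hb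
  obtain rfl : hp = (.y j s, .y j (s + 1)) := by simpa [couplePref_PQ] using hmem
  have hs : ¬ B.LitTrue f j s := fun hl =>
    hM.not_hospOpenFor_of_head (hospPref_y B) (matchingOf_xOfY hl)
      (h₀.resolve_left (by simp [matchingOf, ht]))
  -- `Q j s` is last on the list of `y j (s + 1)`, so that hospital must be free
  have hfree : HospFree (matchingOf B f) (.y j (s + 1)) := by
    refine (h₁.resolve_left (by simp [matchingOf, ht])).resolve_right ?_
    rintro ⟨x, -, hpref⟩
    rw [hospPref_y] at hpref
    simp only [add_assoc, Fin.reduceAdd, add_zero] at hpref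
    exact not_prefers_last (xOfY_ne_Q B).symm (by simp) hpref
  have hs₁ : ¬ B.LitTrue f j (s + 1) := fun hl => hfree _ (matchingOf_xOfY hl)
  obtain ⟨t, htrue⟩ := hf j
  have ht_cases : ∀ s t : Fin 3, t = s ∨ t = s + 1 ∨ t = s + 2 := by decide
  rcases ht_cases s t with rfl | rfl | rfl
  · exact hs htrue
  · exact hs₁ htrue
  · exact ht ⟨htrue, by simpa [add_assoc] using hs, by simpa [add_assoc] using hs₁⟩

theorem stable_matchingOf (hf : ∀ j, ∃ s, B.LitTrue f j s) :
    (instI23 B).Stable (matchingOf B f) := by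
  refine ⟨isMatching_matchingOf, fun x h hb => by simpa [instI23] using hb.1, fun c hp hb => ?_⟩
  rcases (mem_couples B).1 hb.1 with ⟨i, b, rfl⟩ | ⟨j, s, rfl⟩
  · exact not_blockCouple_matchingOf_lit hp hb
  · exact not_blockCouple_matchingOf_PQ hf hp hb

end SatToStable

section StableToSat

variable {B} {M : Res2 n m → Option (Hos2 n m)} (hM : (instI23 B).IsMatching M)
  (hnb : ∀ c hp, ¬ (instI23 B).BlockCouple M c hp)
include hM hnb

theorem lit_eq_h_zero (i : Fin n) :
    M (Res2.lit i true 0) = some (Hos2.h i 0) ∨ M (Res2.lit i false 0) = some (Hos2.h i 0) := by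
  by_contra! hne
  refine hnb _ (Hos2.h i 0, Hos2.h i 1)
    ⟨(mem_couples B).2 (Or.inl ⟨i, true, rfl⟩), by simp [couplePref_lit], ?_, ?_, ?_⟩
  · rcases lit_cases hM i true with h | h | h
    · exact Or.inl h
    · exact absurd (h 0) hne.1
    · refine Or.inr ⟨(yLit B i true 0, yLit B i true 1), by simp [couplePref_lit], h 0, h 1, ?_⟩
      rw [couplePref_lit]
      exact prefers_head (by simp) (by simp)
  · refine Or.inr (Or.inl fun r hr => ?_)
    have hmem := hM.mem_hospPref (hospListsComplete B) hr
    simp only [hospPref_h_zero, List.mem_cons, List.not_mem_nil, or_false] at hmem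
    rcases hmem with rfl | rfl
    exacts [hne.1 hr, hne.2 hr]
  · refine Or.inr (Or.inl fun r hr => ?_)
    have hmem := hM.mem_hospPref (hospListsComplete B) hr
    simp only [hospPref_h_one, List.mem_cons, List.not_mem_nil, or_false] at hmem
    rcases hmem with rfl | rfl
    exacts [hne.2 (lit_zero_eq_h_of_lit_one_eq_h hM hr),
      hne.1 (lit_zero_eq_h_of_lit_one_eq_h hM hr)]

theorem exists_xOfY_eq_y (j : Fin m) : ∃ s, M (xOfY B j s) = some (Hos2.y j s) := by
  by_contra! hx
  by_cases hmatched : ∃ s, M (Res2.P j s) = some (Hos2.y j s)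
  · obtain ⟨s, hPs⟩ := hmatched
    have hQs : M (Res2.Q j s) = some (Hos2.y j (s + 1)) :=
      ((PQ_cases hM j s).resolve_left (by simp [hPs])).2
    -- the next couple wants `y j (s + 1)`, which `Q j s` holds, and the free `y j (s + 2)`
    obtain ⟨hPnext, hQnext⟩ : M (Res2.P j (s + 1)) = none ∧ M (Res2.Q j (s + 1)) = none :=
      (PQ_cases hM j (s + 1)).resolve_right fun h => absurd (hM.1 _ _ _ h.1 hQs) (by simp)
    refine hnb _ _
      (blockCouple_PQ B hPnext hQnext (Or.inr ⟨_, hQs, ?_⟩) (hospFree_y hM (hx _) ?_ ?_))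
    · rw [hospPref_y]
      simpa [add_assoc] using prefers_middle (a := xOfY B j (s + 1)) (c := Res2.Q j s)
        (xOfY_ne_P B).symm (xOfY_ne_Q B).symm (by simp)
    · intro h
      have hQ := ((PQ_cases hM j (s + 1 + 1)).resolve_left (by simp [h])).2
      simp only [add_assoc, Fin.reduceAdd, add_zero] at hQ
      exact absurd (hM.1 _ _ _ hQ hPs) (by simp)
    · simp [add_assoc, hQnext]
  · simp only [not_exists] at hmatched
    have hnone (s : Fin 3) : M (Res2.P j s) = none ∧ M (Res2.Q j s) = none :=
      (PQ_cases hM j s).resolve_right fun h => hmatched s h.1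
    have hfree (s : Fin 3) : HospFree M (Hos2.y j s) :=
      hospFree_y hM (hx s) (by simp [(hnone s).1]) (by simp [(hnone _).2])
    exact hnb _ _ (blockCouple_PQ B (hnone 0).1 (hnone 0).2 (Or.inl (hfree 0)) (hfree _))

end StableToSat

theorem satisfiable_of_stable {M : Res2 n m → Option (Hos2 n m)} (hS : (instI23 B).Stable M) :
    B.Satisfiable := by
  obtain ⟨hM, -, hnb⟩ := hS
  refine ⟨fun i => decide (M (Res2.lit i true 0) ≠ some (Hos2.h i 0)), fun j => ?_⟩
  obtain ⟨s, hs⟩ := exists_xOfY_eq_y hM hnb j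
  refine ⟨s, ?_⟩
  rw [xOfY_eq_lit] at hs
  rcases hcl : B.clause j s with ⟨i, b⟩
  rw [hcl] at hs
  have hne := lit_zero_ne_h_of_lit_eq_y hM hs
  cases b
  · simpa using (lit_eq_h_zero hM hnb i).resolve_right hne
  · simpa using hne

end instI23

/-- `B` is satisfiable if and only if `I₂₃(B)` admits a stable matching. -/
theorem satisfiable_iff_instI23_admits_stable {n m : ℕ} (B : E3SAT n m) :
    B.Satisfiable ↔ ∃ M : Res2 n m → Option (Hos2 n m), (instI23 B).Stable M :=
  ⟨fun ⟨f, hf⟩ => ⟨instI23.matchingOf B f, instI23.stable_matchingOf hf⟩,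
    fun ⟨_, hS⟩ => instI23.satisfiable_of_stable B hS⟩
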